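/- Let k be an algebraically closed field, Y a set of indeterminates with |k| > |Y|, and F ⊆ k[Y] a set of polynomials. Then the ideal of all polynomials vanishing on the common zero set of F in k^Y equals the radical of the ideal generated by F. -/

import Mathlib

/-!
Let `m` be a maximal ideal of `k[σ]` with `σ` infinite. The residue field `k[σ] ⧸ m` has
`k`-dimension at most `#(σ →₀ ℕ) = #σ < #k`, while a transcendental element `t` would give the
`#k` linearly independent elements `(t - a)⁻¹`, `a : k`. So the residue field is algebraic over
the algebraically closed `k`, i.e. equal to `k`, and `m` vanishes at a point (for finite `σ` this
is Mathlib's Nullstellensatz). The strong form follows by the Rabinowitsch trick in `k[Option σ]`,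
which still has fewer than `#k` variables.
-/

open MvPolynomial Cardinal

section

universe u

theorem Algebra.IsAlgebraic.of_rank_lt_cardinalMk {k K : Type u} [Field k] [Field K] [Algebra k K]
    (h : Module.rank k K < #k) : Algebra.IsAlgebraic k K :=
  ⟨fun _ => of_not_not fun ht =>
    (Transcendental.linearIndependent_sub_inv ht).cardinal_le_rank.not_gt h⟩

theorem Ideal.IsMaximal.exists_algHom_le_ker {k A : Type u} [Field k] [IsAlgClosed k]
    [CommRing A] [Algebra k A] (hA : Module.rank k A < #k) {I : Ideal A} (hI : I.IsMaximal) :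
    ∃ φ : A →ₐ[k] k, I ≤ RingHom.ker φ := by
  let := Ideal.Quotient.field I
  have hrank : Module.rank k (A ⧸ I) < #k :=
    (LinearMap.rank_le_of_surjective (Ideal.Quotient.mkₐ k I).toLinearMap
      Ideal.Quotient.mk_surjective).trans_lt hA
  have := Algebra.IsAlgebraic.of_rank_lt_cardinalMk hrank
  refine ⟨(IsAlgClosed.lift : A ⧸ I →ₐ[k] k).comp (Ideal.Quotient.mkₐ k I), fun a ha => ?_⟩
  simp [Ideal.Quotient.eq_zero_iff_mem.mpr ha]

namespace MvPolynomial

theorem zeroLocus_nonempty_of_ne_top {k σ : Type u} [Field k] [IsAlgClosed k]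
    (hσ : #σ < #k) {J : Ideal (MvPolynomial σ k)} (hJ : J ≠ ⊤) : (zeroLocus k J).Nonempty := by
  obtain ⟨m, hm, hJm⟩ := J.exists_le_maximal hJ
  cases finite_or_infinite σ
  · obtain ⟨x, rfl⟩ := eq_vanishingIdeal_singleton_of_isMaximal k hm
    exact ⟨x, zeroLocus_anti_mono hJm (zeroLocus_vanishingIdeal_le _ rfl)⟩
  · have hrank : Module.rank k (MvPolynomial σ k) < #k := by
      rwa [rank_eq, mk_finsupp_nat, max_eq_left (aleph0_le_mk σ)]
    obtain ⟨φ, hφ⟩ := hm.exists_algHom_le_ker hrank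
    refine ⟨φ ∘ X, fun p hp => ?_⟩
    rw [← aeval_unique φ]
    exact hφ (hJm hp)

/-- The ideal `(I, 1 - T f)` of `R[σ][T]`, with `T = X none`. -/
noncomputable def rabinowitschIdeal {R σ : Type*} [CommRing R] (I : Ideal (MvPolynomial σ R))
    (f : MvPolynomial σ R) : Ideal (MvPolynomial (Option σ) R) :=
  Ideal.span (rename some '' (I : Set (MvPolynomial σ R)) ∪ {1 - X none * rename some f})

theorem mem_radical_of_rabinowitschIdeal_eq_top {R σ : Type*} [CommRing R]
    {I : Ideal (MvPolynomial σ R)} {f : MvPolynomial σ R} (h : rabinowitschIdeal I f = ⊤) :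
    f ∈ I.radical := by
  let A := MvPolynomial σ R ⧸ I
  let L := Localization.Away (Ideal.Quotient.mk I f)
  let π : MvPolynomial σ R →ₐ[R] L := (IsScalarTower.toAlgHom R A L).comp (Ideal.Quotient.mkₐ R I)
  let ψ : MvPolynomial (Option σ) R →ₐ[R] L :=
    aeval (Option.elim · (IsLocalization.Away.invSelf (Ideal.Quotient.mk I f)) (π ∘ X))
  have hπ : ∀ p, π p = algebraMap A L (Ideal.Quotient.mk I p) := fun _ => rfl
  have hψ : ψ.comp (rename some) = π := algHom_ext fun i => by simp [ψ]
  -- `T ↦ 1 / f` kills the Rabinowitsch ideal, so `(R[σ] ⧸ I)[1 / f]` is the zero ring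
  have hker : rabinowitschIdeal I f ≤ RingHom.ker ψ := by
    rw [rabinowitschIdeal, Ideal.span_le]
    rintro _ (⟨g, hg, rfl⟩ | rfl) <;> rw [SetLike.mem_coe, RingHom.mem_ker]
    · rw [← AlgHom.comp_apply, hψ, hπ, Ideal.Quotient.eq_zero_iff_mem.mpr hg, map_zero]
    · rw [map_sub, map_one, map_mul, ← AlgHom.comp_apply, hψ, aeval_X, Option.elim_none, hπ,
        mul_comm, IsLocalization.Away.mul_invSelf, sub_self]
  have h10 : algebraMap A L 1 = algebraMap A L 0 := by
    simpa using hker (h ▸ Submodule.mem_top : (1 : MvPolynomial (Option σ) R) ∈ _)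
  obtain ⟨⟨_, n, rfl⟩, hn⟩ :=
    (IsLocalization.eq_iff_exists (Submonoid.powers (Ideal.Quotient.mk I f)) L).mp h10
  refine ⟨n, Ideal.Quotient.eq_zero_iff_mem.mp ?_⟩
  simpa using hn

theorem vanishingIdeal_zeroLocus_eq_radical_of_cardinalMk_lt {k σ : Type u} [Field k]
    [IsAlgClosed k] (hσ : #σ < #k) (I : Ideal (MvPolynomial σ k)) :
    vanishingIdeal k (zeroLocus k I) = I.radical := by
  refine le_antisymm (fun f hf => ?_) (radical_le_vanishingIdeal_zeroLocus I)
  refine mem_radical_of_rabinowitschIdeal_eq_top (of_not_not fun hJ => ?_)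
  have hσ' : #(Option σ) < #k := by
    rw [mk_option]
    exact add_lt_of_lt (aleph0_le_mk k) hσ (one_lt_aleph0.trans_le (aleph0_le_mk k))
  obtain ⟨x, hx⟩ := zeroLocus_nonempty_of_ne_top hσ' hJ
  have hxI : x ∘ some ∈ zeroLocus k I := fun g hg => by
    rw [← aeval_rename]
    exact hx _ (Ideal.subset_span (Or.inl ⟨g, hg, rfl⟩))
  have h1 := hx _ (Ideal.subset_span (Or.inr rfl))
  rw [map_sub, map_one, map_mul, aeval_rename, hf _ hxI, mul_zero, sub_zero] at h1
  exact one_ne_zero h1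

end MvPolynomial

end

theorem stmt3.{u} (k : Type u) [Field k] [IsAlgClosed k] (Y : Type u)
    (hcard : Cardinal.mk Y < Cardinal.mk k) (F : Set (MvPolynomial Y k)) :
    {f : MvPolynomial Y k | ∀ y : Y → k, (∀ g ∈ F, MvPolynomial.eval y g = 0) →
        MvPolynomial.eval y f = 0} = ↑(Ideal.span F).radical := by
  rw [← vanishingIdeal_zeroLocus_eq_radical_of_cardinalMk_lt hcard, zeroLocus_span]
  rfl
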